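/- Let C be a well-powered category with wide pullbacks and let F : C ⥤ C preserve monomorphisms and intersections. Then for every morphism f : X ⟶ F.obj Y, the previous-time operator ⬗_f : Subobject X → Subobject Y is left adjoint to the next-time operator ○_f : Subobject Y → Subobject X, i.e., they form a Galois connection: ⬗_f m ≤ n if and only if m ≤ ○_f n, for all subobjects m of X and n of Y. Consequently ⬗_f preserves arbitrary suprema of subobjects. -/

import Mathlib

open CategoryTheory CategoryTheory.Limits

universe w v u

variable {C : Type u} [Category.{v} C]

/-- A functor preserves monomorphisms. -/
def PreservesMonos (F : C ⥤ C) : Prop :=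
  ∀ ⦃X Y : C⦄ (f : X ⟶ Y), Mono f → Mono (F.map f)

/-- The induced map on subobject lattices of a mono-preserving functor. -/
noncomputable def subMap {F : C ⥤ C} (hF : PreservesMonos F) {Y : C} (m : Subobject Y) :
    Subobject (F.obj Y) :=
  letI : Mono (F.map m.arrow) := hF m.arrow inferInstance
  Subobject.mk (F.map m.arrow)

/-- A mono-preserving functor preserves intersections if the induced maps on subobject
lattices preserve arbitrary infima. -/
def PreservesIntersections [WellPowered.{v} C] [HasWidePullbacks.{v} C] {F : C ⥤ C}
    (hF : PreservesMonos F) : Prop :=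
  ∀ ⦃Y : C⦄ (s : Set (Subobject Y)), subMap hF (sInf s) = sInf (subMap hF '' s)

/-- The "next time" operator of a morphism `f : X ⟶ F.obj Y`. -/
noncomputable def nextTime [HasPullbacks C] {F : C ⥤ C} (hF : PreservesMonos F)
    {X Y : C} (f : X ⟶ F.obj Y) (n : Subobject Y) : Subobject X :=
  (Subobject.pullback f).obj (subMap hF n)

/-- The "previous time" operator of a morphism `f : X ⟶ F.obj Y`: it sends a subobject `m` of
`X` to the least subobject `n` of `Y` such that `m.arrow ≫ f` factors through `F.map n.arrow`. -/
noncomputable def prevTime [WellPowered.{v} C] [HasWidePullbacks.{v} C] (F : C ⥤ C)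
    {X Y : C} (f : X ⟶ F.obj Y) (m : Subobject X) : Subobject Y :=
  sInf {n : Subobject Y | ∃ g : (m : C) ⟶ F.obj (n : C), g ≫ F.map n.arrow = m.arrow ≫ f}

/-- An `I`-pointed coalgebra `(X, c, i)` is reachable if every monomorphic homomorphism of
`I`-pointed coalgebras into it is an isomorphism. -/
def Reachable (F : C ⥤ C) {I X : C} (c : X ⟶ F.obj X) (i : I ⟶ X) : Prop :=
  ∀ ⦃S : C⦄ (s : S ⟶ F.obj S) (iS : I ⟶ S) (m : S ⟶ X),
    Mono m → s ≫ F.map m = m ≫ c → iS ≫ m = i → IsIso m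

/-! The infimum `⬗_f m` of all `n` with `m ≤ ○_f n` is itself such an `n` because `F` preserves
intersections and a morphism factors through a meet of subobjects as soon as it factors through
each of them; together with monotonicity of `○_f` this gives the Galois connection. -/

namespace CategoryTheory.Subobject

theorem le_pullback_obj_iff_factors [HasPullbacks C] {X Y : C} (f : X ⟶ Y) (m : Subobject X)
    (P : Subobject Y) : m ≤ (pullback f).obj P ↔ P.Factors (m.arrow ≫ f) := by
  rw [← Limits.pullback_factors_iff]
  exact ⟨fun h => factors_of_le _ h m.factors_self, le_of_factors⟩

theorem sInf_factors [WellPowered.{v} C] [HasWidePullbacks.{v} C]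
    {A Y : C} (s : Set (Subobject Y)) (h : A ⟶ Y) :
    (InfSet.sInf s).Factors h ↔ ∀ P ∈ s, P.Factors h := by
  -- pins the universe of the `Shrink` through which `sInf` is built
  have : LocallySmall.{v} C := inferInstance
  refine ⟨fun hs P hP => factors_of_le h (sInf_le s P hP) hs, fun hs => ?_⟩
  change (sInf s).Factors h
  rw [Subobject.sInf, mk_factors_iff]
  let c : Cone (wideCospan s) :=
    WidePullbackShape.mkCone h
      (fun j => (equivShrink (Subobject Y)).symm j |>.factorThru h <| hs _ <| by
        rcases j with ⟨-, ⟨P, hP, rfl⟩⟩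
        simpa using hP)
      (fun _ => factorThru_arrow _ _ _)
  exact ⟨limit.lift _ c, limit.lift_π c none⟩

end CategoryTheory.Subobject

section

variable {F : C ⥤ C} (hF : PreservesMonos F)

theorem subMap_factors_iff {Y A : C} (n : Subobject Y) (h : A ⟶ F.obj Y) :
    (subMap hF n).Factors h ↔ ∃ g : A ⟶ F.obj n, g ≫ F.map n.arrow = h :=
  haveI := hF n.arrow inferInstance
  Subobject.mk_factors_iff _ _

theorem subMap_monotone {Y : C} : Monotone (subMap hF (Y := Y)) := fun n n' h => by
  have := hF n.arrow inferInstance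
  have := hF n'.arrow inferInstance
  exact Subobject.mk_le_mk_of_comm (F.map (Subobject.ofLE n n' h))
    (by rw [← F.map_comp, Subobject.ofLE_arrow])

theorem nextTime_monotone [HasPullbacks C] {X Y : C} (f : X ⟶ F.obj Y) :
    Monotone (nextTime hF f) :=
  (Subobject.pullback f).monotone.comp (subMap_monotone hF)

theorem le_nextTime_iff_factors [HasPullbacks C] {X Y : C} (f : X ⟶ F.obj Y)
    (m : Subobject X) (n : Subobject Y) :
    m ≤ nextTime hF f n ↔ (subMap hF n).Factors (m.arrow ≫ f) :=
  Subobject.le_pullback_obj_iff_factors f m (subMap hF n)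

variable [WellPowered.{v} C] [HasWidePullbacks.{v} C]

theorem prevTime_eq_sInf {X Y : C} (f : X ⟶ F.obj Y) (m : Subobject X) :
    prevTime F f m = sInf {n | (subMap hF n).Factors (m.arrow ≫ f)} := by
  simp only [prevTime, subMap_factors_iff]

theorem le_nextTime_prevTime (hInt : PreservesIntersections hF) {X Y : C} (f : X ⟶ F.obj Y)
    (m : Subobject X) : m ≤ nextTime hF f (prevTime F f m) := by
  rw [le_nextTime_iff_factors, prevTime_eq_sInf hF, hInt, Subobject.sInf_factors]
  exact Set.forall_mem_image.2 fun _ => id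

theorem prevTime_le_of_le_nextTime {X Y : C} (f : X ⟶ F.obj Y) {m : Subobject X}
    {n : Subobject Y} (h : m ≤ nextTime hF f n) : prevTime F f m ≤ n := by
  rw [prevTime_eq_sInf hF]
  exact Subobject.sInf_le.{v} _ n ((le_nextTime_iff_factors hF f m n).mp h)

end

/-- For an intersection-preserving functor, the "previous time" operator `⬗_f` is left
adjoint to the "next time" operator `○_f` (they form a Galois connection); consequently
`⬗_f` preserves arbitrary suprema of subobjects. -/
theorem prevTime_galoisConnection_nextTime
    [WellPowered.{v} C] [HasWidePullbacks.{v} C]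
    (F : C ⥤ C) (hF : PreservesMonos F) (hInt : PreservesIntersections hF)
    {X Y : C} (f : X ⟶ F.obj Y) :
    GaloisConnection (prevTime F f) (nextTime hF f) ∧
      ∀ (s : Set (Subobject X)) (m : Subobject X),
        IsLUB s m → IsLUB (prevTime F f '' s) (prevTime F f m) := by
  have gc : GaloisConnection (prevTime F f) (nextTime hF f) := fun m n =>
    ⟨fun h => (le_nextTime_prevTime hF hInt f m).trans (nextTime_monotone hF f h),
      prevTime_le_of_le_nextTime hF f⟩
  exact ⟨gc, fun _ _ => gc.isLUB_l_image⟩
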